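/- Let n ≥ 53 and set d = 1, a_1 = -1, f(s) = a_0 + a_1 s, with a_0 = ((n+3)(n-6)/(2(n-7)(n-8)))·(3 + √(9 - 8(n-7)(n-8)²(n+7)/((n+3)(n-6)(n-9)(n-10)))). Define I(s) = Σ_{q=0}^{2} (α_q/(n-6-2q))·(∏_{j=0}^{q} (n-1+2j)/(n-5-2j))·s^{q+2}, where α_0 = (n+1)a_0², α_1 = 2(n+3)a_0 a_1, α_2 = (n+7)a_1². Then I'(1) = 0. -/

import Mathlib

/-!
Differentiating termwise, `I'(1) = Σ_q (q + 2) c_q`, which after clearing the products is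
`2 (n + 1) (n - 1) / (n - 5)` times a quadratic form in `(a₀, a₁)`. At `a₁ = -1` this form is,
up to the factor `1 / (n - 6)`, the monic quadratic `a² - 6 k a + k² r` with
`k = (n + 3)(n - 6) / (2 (n - 7)(n - 8))`, whose larger root is `k (3 + √(9 - r))`; for
`n ≥ 53` the discriminant `9 - r` is nonnegative, so the prescribed `a₀` is that root.
-/

open Finset

theorem hasDerivAt_sum_mul_pow_add (c : ℕ → ℝ) (m k : ℕ) (x : ℝ) :
    HasDerivAt (fun s : ℝ => ∑ q ∈ range m, c q * s ^ (q + k))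
      (∑ q ∈ range m, c q * ((q + k : ℕ) * x ^ (q + k - 1))) x :=
  HasDerivAt.fun_sum fun q _ => (hasDerivAt_pow (q + k) x).const_mul (c q)

theorem sq_sub_mul_add_eq_zero_of_le (k r : ℝ) (hr : r ≤ 9) :
    (k * (3 + √(9 - r))) ^ 2 - 6 * k * (k * (3 + √(9 - r))) + k ^ 2 * r = 0 := by
  have hs : √(9 - r) ^ 2 = 9 - r := Real.sq_sqrt (by linarith)
  linear_combination k ^ 2 * hs

theorem discr_nonneg {N : ℝ} (hN : 53 ≤ N) :
    8 * (N - 7) * (N - 8) ^ 2 * (N + 7) ≤ 9 * ((N + 3) * (N - 6) * (N - 9) * (N - 10)) := by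
  nlinarith [sq_nonneg (N - 53), sq_nonneg ((N - 53) * (N - 53)), sq_nonneg ((N - 53) * (N - 54))]

/-- The paper's `p_n(a₀)` is `criticalQuadratic n a₀ (-1)`. -/
noncomputable def criticalQuadratic (N a0 a1 : ℝ) : ℝ :=
  a0 ^ 2 / (N - 6) + 3 * (N + 3) * a0 * a1 / ((N - 8) * (N - 7)) +
    2 * (N + 3) * (N + 7) * a1 ^ 2 / ((N - 10) * (N - 7) * (N - 9))

theorem sum_coeff_mul_eq_criticalQuadratic {N : ℝ} (hN : 10 < N) (a0 a1 : ℝ) :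
    let α : ℕ → ℝ := fun q =>
      if q = 0 then (N + 1) * a0 ^ 2 else if q = 1 then 2 * (N + 3) * a0 * a1 else (N + 7) * a1 ^ 2
    ∑ q ∈ range 3, (α q / (N - 6 - 2 * q)) *
        (∏ j ∈ range (q + 1), (N - 1 + 2 * j) / (N - 5 - 2 * j)) * (q + 2 : ℕ)
      = 2 * (N + 1) * (N - 1) / (N - 5) * criticalQuadratic N a0 a1 := by
  have h5 : N - 5 ≠ 0 := by linarith
  have h6 : N - 6 ≠ 0 := by linarith
  have h7 : N - 7 ≠ 0 := by linarith
  have h8 : N - 8 ≠ 0 := by linarith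
  have h9 : N - 9 ≠ 0 := by linarith
  have h10 : N - 10 ≠ 0 := by linarith
  simp only [sum_range_succ, prod_range_succ, sum_range_zero, prod_range_zero, criticalQuadratic]
  norm_num [sub_sub, sub_add]
  field_simp
  ring

theorem criticalQuadratic_eq_zero {N : ℝ} (hN : 53 ≤ N) :
    let k := (N + 3) * (N - 6) / (2 * (N - 7) * (N - 8))
    let r := 8 * (N - 7) * (N - 8) ^ 2 * (N + 7) / ((N + 3) * (N - 6) * (N - 9) * (N - 10))
    criticalQuadratic N (k * (3 + √(9 - r))) (-1) = 0 := by
  intro k r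
  have h3 : 0 < N + 3 := by linarith
  have h6 : 0 < N - 6 := by linarith
  have h7 : 0 < N - 7 := by linarith
  have h8 : 0 < N - 8 := by linarith
  have h9 : 0 < N - 9 := by linarith
  have h10 : 0 < N - 10 := by linarith
  have hr : r ≤ 9 := (div_le_iff₀ (by positivity)).2 (discr_nonneg hN)
  have hroot := sq_sub_mul_add_eq_zero_of_le k r hr
  generalize k * (3 + √(9 - r)) = a at hroot ⊢
  simp only [k, r, criticalQuadratic] at hroot ⊢
  field_simp at hroot ⊢
  linear_combination hroot / 4

/-- For `n ≥ 53`, with `d = 1`, `a₁ = -1`, and the indicated choice of `a₀`, the auxiliary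
function `I(s) = Σ_{q=0}^{2} (α_q/(n-6-2q)) (∏_{j=0}^{q} (n-1+2j)/(n-5-2j)) s^{q+2}`
has a critical point at `s = 1`: `I'(1) = 0`. -/
theorem stmt_16 (n : ℕ) (hn : 53 ≤ n) :
    let N : ℝ := n
    let a1 : ℝ := -1
    let a0 : ℝ := (N + 3) * (N - 6) / (2 * (N - 7) * (N - 8)) *
      (3 + Real.sqrt (9 - 8 * (N - 7) * (N - 8) ^ 2 * (N + 7) /
        ((N + 3) * (N - 6) * (N - 9) * (N - 10))))
    let α : ℕ → ℝ := fun q =>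
      if q = 0 then (N + 1) * a0 ^ 2 else if q = 1 then 2 * (N + 3) * a0 * a1 else (N + 7) * a1 ^ 2
    let I : ℝ → ℝ := fun s => ∑ q ∈ Finset.range 3,
      (α q / (N - 6 - 2 * q)) * (∏ j ∈ Finset.range (q + 1), (N - 1 + 2 * j) / (N - 5 - 2 * j)) *
        s ^ (q + 2)
    deriv I 1 = 0 := by
  intro N a1 a0 α I
  have hN : (53 : ℝ) ≤ N := Nat.ofNat_le_cast.2 hn
  rw [(hasDerivAt_sum_mul_pow_add _ 3 2 1).deriv]
  simp only [one_pow, mul_one]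
  rw [sum_coeff_mul_eq_criticalQuadratic (by linarith)]
  exact mul_eq_zero_of_right _ (criticalQuadratic_eq_zero hN)
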